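/- The function F(T) = ∫_0^T w_-(s) ds with λ = 1 has inverse F^{-1}(u) = (sin(πα)/tan(πα(1−u)) − cos(πα))^{1/α} for u ∈ (0,1). -/

import Mathlib

/-!
With `c = cos (απ)` and `s = sin (απ)`, the denominator of `w_-` is `(x ^ α + c) ^ 2 + s ^ 2`, so
`F(T) = (arctan ((T ^ α + c) / s) - arctan (c / s)) / (πα)`. Since `arctan (cot φ) = π/2 - φ` on
`(0, π)`, the equation `(T ^ α + c) / s = cot θ` gives `F(T) = 1 - θ / (πα)`, and
`θ = πα(1 - u)` yields `F(T) = u`.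
-/

open Real MeasureTheory

noncomputable def wMinusOne (α s : ℝ) : ℝ :=
  (Real.sin (α * π) / π) *
    (s ^ (α - 1) / (s ^ (2 * α) + 2 * s ^ α * Real.cos (α * π) + 1))

open Set

lemma sin_sq_le_sq_add_two_mul_cos_add_one (a φ : ℝ) : sin φ ^ 2 ≤ a ^ 2 + 2 * a * cos φ + 1 := by
  nlinarith [sq_nonneg (a + cos φ), sin_sq_add_cos_sq φ]

lemma arctan_inv_tan {φ : ℝ} (h0 : 0 < φ) (hπ : φ < π) : arctan (tan φ)⁻¹ = π / 2 - φ := by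
  rw [← tan_pi_div_two_sub, arctan_tan (by linarith) (by linarith)]

lemma sin_div_tan_sub_cos_pos {θ φ : ℝ} (hθ : 0 < θ) (hθφ : θ < φ) (hφ : φ < π) :
    0 < sin φ / tan θ - cos φ := by
  have hsinθ : 0 < sin θ := sin_pos_of_pos_of_lt_pi hθ (hθφ.trans hφ)
  have key : sin φ / tan θ - cos φ = sin (φ - θ) / sin θ := by
    rw [tan_eq_sin_div_cos, sin_sub]
    field_simp
  rw [key]
  exact div_pos (sin_pos_of_pos_of_lt_pi (by linarith) (by linarith)) hsinθ

noncomputable def wMinusOneCDF (α T : ℝ) : ℝ :=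
  (arctan ((T ^ α + cos (α * π)) / sin (α * π)) - arctan (cos (α * π) / sin (α * π))) / (π * α)

lemma sin_mul_pi_pos {α : ℝ} (hα : 0 < α) (hα1 : α < 1) : 0 < sin (α * π) :=
  sin_pos_of_pos_of_lt_pi (by positivity) (by nlinarith [pi_pos])

lemma wMinusOne_denom_pos {α x : ℝ} (hα : 0 < α) (hα1 : α < 1) (hx : 0 ≤ x) :
    0 < x ^ (2 * α) + 2 * x ^ α * cos (α * π) + 1 := by
  rw [mul_comm 2 α, rpow_mul hx, rpow_two]
  exact (pow_pos (sin_mul_pi_pos hα hα1) 2).trans_le (sin_sq_le_sq_add_two_mul_cos_add_one _ _)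

lemma wMinusOne_nonneg {α x : ℝ} (hα : 0 < α) (hα1 : α < 1) (hx : 0 ≤ x) : 0 ≤ wMinusOne α x := by
  have := sin_mul_pi_pos hα hα1
  have := wMinusOne_denom_pos hα hα1 hx
  unfold wMinusOne
  positivity

lemma hasDerivAt_wMinusOneCDF {α x : ℝ} (hα : 0 < α) (hα1 : α < 1) (hx : 0 < x) :
    HasDerivAt (wMinusOneCDF α) (wMinusOne α x) x := by
  have hsin := sin_mul_pi_pos hα hα1
  have hD := wMinusOne_denom_pos hα hα1 hx.le
  have hpow : HasDerivAt (fun s : ℝ => s ^ α) (α * x ^ (α - 1)) x :=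
    hasDerivAt_rpow_const (Or.inl hx.ne')
  have := ((((hpow.add_const (cos (α * π))).div_const (sin (α * π))).arctan).sub_const
    (arctan (cos (α * π) / sin (α * π)))).div_const (π * α)
  refine this.congr_deriv ?_
  rw [mul_comm 2 α, rpow_mul hx.le, rpow_two] at hD
  have hsq : 1 + ((x ^ α + cos (α * π)) / sin (α * π)) ^ 2
      = ((x ^ α) ^ 2 + 2 * x ^ α * cos (α * π) + 1) / sin (α * π) ^ 2 := by
    field_simp
    linear_combination sin_sq_add_cos_sq (α * π)
  rw [hsq, wMinusOne, mul_comm 2 α, rpow_mul hx.le, rpow_two]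
  field_simp

lemma continuous_wMinusOneCDF {α : ℝ} (hα : 0 ≤ α) : Continuous (wMinusOneCDF α) := by
  unfold wMinusOneCDF
  fun_prop (disch := assumption)

lemma integral_wMinusOne {α T : ℝ} (hα : 0 < α) (hα1 : α < 1) (hT : 0 ≤ T) :
    ∫ s in Ioc 0 T, wMinusOne α s = wMinusOneCDF α T := by
  have hderiv : ∀ x ∈ Ioo 0 T, HasDerivAt (wMinusOneCDF α) (wMinusOne α x) x :=
    fun x hx => hasDerivAt_wMinusOneCDF hα hα1 hx.1
  have hcont := (continuous_wMinusOneCDF hα.le).continuousOn (s := Icc 0 T)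
  have hint : IntervalIntegrable (wMinusOne α) volume 0 T :=
    (intervalIntegrable_iff_integrableOn_Ioc_of_le hT).2 <|
      intervalIntegral.integrableOn_deriv_of_nonneg hcont hderiv
        fun x hx => wMinusOne_nonneg hα hα1 hx.1.le
  rw [← intervalIntegral.integral_of_le hT,
    intervalIntegral.integral_eq_sub_of_hasDerivAt_of_le hT hcont hderiv hint]
  simp [wMinusOneCDF, zero_rpow hα.ne']

lemma wMinusOneCDF_eq_of_rpow_eq {α T θ : ℝ} (hα : 0 < α) (hα1 : α < 1) (hθ : 0 < θ)
    (hθπ : θ < π) (hT : T ^ α = sin (α * π) / tan θ - cos (α * π)) :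
    wMinusOneCDF α T = 1 - θ / (π * α) := by
  have hsin := sin_mul_pi_pos hα hα1
  have hcot : (T ^ α + cos (α * π)) / sin (α * π) = (tan θ)⁻¹ := by
    rw [hT, sub_add_cancel, div_div_cancel_left' hsin.ne']
  have hcot' : cos (α * π) / sin (α * π) = (tan (α * π))⁻¹ := by
    rw [tan_eq_sin_div_cos, inv_div]
  rw [wMinusOneCDF, hcot, hcot', arctan_inv_tan hθ hθπ,
    arctan_inv_tan (by positivity) (by nlinarith [pi_pos])]
  field_simp
  ring

theorem cdf_inverse {α : ℝ} (hα : 0 < α) (hα1 : α < 1) {u : ℝ} (hu : u ∈ Set.Ioo (0 : ℝ) 1) :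
    (∫ s in Set.Ioc (0 : ℝ)
        ((Real.sin (π * α) / Real.tan (π * α * (1 - u)) - Real.cos (π * α)) ^ (1 / α)),
      wMinusOne α s) = u := by
  obtain ⟨hu0, hu1⟩ := hu
  rw [mul_comm π α]
  have hαπ : α * π < π := by nlinarith [pi_pos]
  have hθ : 0 < α * π * (1 - u) := mul_pos (by positivity) (by linarith)
  have hθαπ : α * π * (1 - u) < α * π := by nlinarith [pi_pos]
  have hbase := sin_div_tan_sub_cos_pos hθ hθαπ hαπ
  have hT : ((sin (α * π) / tan (α * π * (1 - u)) - cos (α * π)) ^ (1 / α)) ^ α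
      = sin (α * π) / tan (α * π * (1 - u)) - cos (α * π) := by
    rw [one_div, rpow_inv_rpow hbase.le hα.ne']
  rw [integral_wMinusOne hα hα1 (rpow_nonneg hbase.le _),
    wMinusOneCDF_eq_of_rpow_eq hα hα1 hθ (hθαπ.trans hαπ) hT]
  field_simp
  ring
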